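/- Let C be a fusion category and FPdim: K(C) → ℝ the unique ring homomorphism on the Grothendieck ring that is positive on all objects. If X is an object with FPdim(X) = 1 and Y is any simple object, then X ⊗ Y is simple. (In the language of the paper: an irreducible module of quantum dimension 1 is a simple current, and tensoring with it permutes the simple objects.) -/

import Mathlib

/-!
Let `A j k = N x j k` be the matrix of tensoring with `x`. Since `d x = 1`, the dimension vector
`d` is a positive fixed vector of `A`. Every column of `A` is nonzero, because `x ⊗ x*` contains
the unit, so `x* ⊗ k` has a summand `m` with `k ⊆ x ⊗ m`. Pairing the column sums against
`d` then forces them all to be `1`; as every row is nonzero too, counting entries shows every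
row sum is `1`, i.e. `x ⊗ y` is simple.
-/

open Finset

section NatMatrix

variable {ι : Type*} [Fintype ι] (A : ι → ι → ℕ)

lemma exists_eq_ite_of_sum_eq_one [DecidableEq ι] {f : ι → ℕ} (h : ∑ k, f k = 1) :
    ∃ z, ∀ k, f k = if k = z then 1 else 0 := by
  obtain ⟨z, -, hz⟩ := exists_ne_zero_of_sum_ne_zero (h ▸ one_ne_zero)
  have hsplit := add_sum_erase univ f (mem_univ z)
  have hrest : ∑ k ∈ univ.erase z, f k = 0 := by omega
  refine ⟨z, fun k => ?_⟩
  split_ifs with hk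
  · subst hk; omega
  · exact sum_eq_zero_iff.mp hrest k (mem_erase.mpr ⟨hk, mem_univ k⟩)

lemma one_le_sum_of_exists_ne_zero {f : ι → ℕ} (h : ∃ k, f k ≠ 0) : 1 ≤ ∑ k, f k := by
  obtain ⟨k, hk⟩ := h
  exact (Nat.one_le_iff_ne_zero.mpr hk).trans
    (single_le_sum (fun _ _ => Nat.zero_le _) (mem_univ k))

lemma sum_col_eq_one_of_fixed_vector {d : ι → ℝ} (hd : ∀ i, 0 < d i)
    (hfix : ∀ j, ∑ k, (A j k : ℝ) * d k = d j) (hcol : ∀ k, ∃ j, A j k ≠ 0) (k : ι) :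
    ∑ j, A j k = 1 := by
  have hpair : ∑ k, d k = ∑ k, ((∑ j, A j k : ℕ) : ℝ) * d k := by
    simp_rw [Nat.cast_sum, sum_mul]
    rw [sum_comm]
    exact sum_congr rfl fun j _ => (hfix j).symm
  have hle : ∀ k ∈ univ, d k ≤ ((∑ j, A j k : ℕ) : ℝ) * d k := fun k _ =>
    le_mul_of_one_le_left (hd k).le (by exact_mod_cast one_le_sum_of_exists_ne_zero (hcol k))
  have hk := (sum_eq_sum_iff_of_le hle).mp hpair k (mem_univ k)
  exact_mod_cast (mul_eq_right₀ (hd k).ne').mp hk.symm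

lemma sum_row_eq_one_of_sum_col_eq_one (hcol : ∀ k, ∑ j, A j k = 1)
    (hrow : ∀ j, ∃ k, A j k ≠ 0) (j : ι) : ∑ k, A j k = 1 := by
  have htotal : ∑ j : ι, 1 = ∑ j, ∑ k, A j k := by
    rw [sum_comm]
    exact sum_congr rfl fun k _ => (hcol k).symm
  exact ((sum_eq_sum_iff_of_le fun j _ => one_le_sum_of_exists_ne_zero (hrow j)).mp
    htotal j (mem_univ j)).symm

end NatMatrix

lemma exists_fusion_ne_zero {ι : Type*} [Fintype ι] [DecidableEq ι] (e : ι)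
    (N : ι → ι → ι → ℕ) (hunit_l : ∀ i k, N e i k = if k = i then 1 else 0)
    (hassoc : ∀ i j k l, ∑ m, N i j m * N m k l = ∑ m, N j k m * N i m l)
    (star : ι → ι) (hdual : ∀ i j, N i j e = if j = star i then 1 else 0) (x k : ι) :
    ∃ j, N x j k ≠ 0 := by
  have hunit : 1 ≤ ∑ m, N x (star x) m * N m k k :=
    one_le_sum_of_exists_ne_zero ⟨e, by simp [hdual, hunit_l]⟩
  rw [hassoc] at hunit
  obtain ⟨m, hm⟩ := exists_ne_zero_of_sum_ne_zero (Nat.one_le_iff_ne_zero.mp hunit)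
  exact ⟨m, right_ne_zero_of_mul hm.2⟩

theorem stmt8_general {ι : Type*} [Fintype ι] [DecidableEq ι] (e : ι)
    (N : ι → ι → ι → ℕ) (d : ι → ℝ)
    (hunit_l : ∀ i k, N e i k = if k = i then 1 else 0)
    (hassoc : ∀ i j k l, ∑ m, N i j m * N m k l = ∑ m, N j k m * N i m l)
    (star : ι → ι) (hdual : ∀ i j, N i j e = if j = star i then 1 else 0)
    (hd1 : ∀ i, 1 ≤ d i)
    (hhom : ∀ i j, d i * d j = ∑ k, (N i j k : ℝ) * d k)
    (x : ι) (hx : d x = 1) (y : ι) :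
    ∃ z : ι, ∀ k, N x y k = if k = z then 1 else 0 := by
  have hd : ∀ i, 0 < d i := fun i => one_pos.trans_le (hd1 i)
  have hfix : ∀ j, ∑ k, (N x j k : ℝ) * d k = d j := fun j => by
    rw [← hhom, hx, one_mul]
  have hrow : ∀ j, ∃ k, N x j k ≠ 0 := fun j => by
    by_contra! h
    have hzero := hfix j
    simp only [h, Nat.cast_zero, zero_mul, sum_const_zero] at hzero
    exact (hd j).ne hzero
  have hcol := sum_col_eq_one_of_fixed_vector (N x) hd hfix
    (exists_fusion_ne_zero e N hunit_l hassoc star hdual x)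
  exact exists_eq_ite_of_sum_eq_one (sum_row_eq_one_of_sum_col_eq_one (N x) hcol hrow y)

/-- Fusion-ring form of the simple current property: in a fusion category (encoded by
its fusion coefficients `N`, unit `e`, duality `star`, and Frobenius–Perron dimensions
`d`, which form a ring homomorphism and are `≥ 1` on simple objects), if `d x = 1`
then `X ⊗ Y` is simple for every simple `Y`. -/
theorem stmt8 {ι : Type*} [Fintype ι] [DecidableEq ι] (e : ι)
    (N : ι → ι → ι → ℕ) (d : ι → ℝ)
    (hunit_l : ∀ i k, N e i k = if k = i then 1 else 0)
    (hunit_r : ∀ i k, N i e k = if k = i then 1 else 0)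
    (hassoc : ∀ i j k l, ∑ m, N i j m * N m k l = ∑ m, N j k m * N i m l)
    (star : ι → ι) (hdual : ∀ i j, N i j e = if j = star i then 1 else 0)
    (hd1 : ∀ i, 1 ≤ d i)
    (hhom : ∀ i j, d i * d j = ∑ k, (N i j k : ℝ) * d k)
    (x : ι) (hx : d x = 1) (y : ι) :
    ∃ z : ι, ∀ k, N x y k = if k = z then 1 else 0 :=
  stmt8_general e N d hunit_l hassoc star hdual hd1 hhom x hx y
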